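/- arXiv:2412.03175 — 5 statements merged into one kernel-verified Lean document; each statement's English description precedes it below -/
import Mathlib

section
/- Let M be a Hermitian positive-semidefinite T×T complex matrix, C a T×T complex matrix with C ≠ 0, and define f(λ) = Re Tr( (M + λ I_T)⁻¹ C C† (M + λ I_T)⁻¹ ) for λ > 0. Then f is strictly decreasing on (0, ∞) and f(λ) → 0 as λ → ∞. -/
open Matrix
open scoped ComplexOrder

/-- For Hermitian positive-semidefinite `M` and `C ≠ 0`, the transmit power
`f(λ) = Re Tr((M + λI)⁻¹ C Cᴴ (M + λI)⁻¹)` is strictly decreasing on `(0, ∞)` and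
tends to `0` as `λ → ∞`. -/
theorem stmt_5 (T : ℕ) (M : Matrix (Fin T) (Fin T) ℂ) (hM : M.PosSemidef)
    (C : Matrix (Fin T) (Fin T) ℂ) (hC : C ≠ 0) :
    let f : ℝ → ℝ := fun l =>
      (Matrix.trace ((M + (l : ℂ) • (1 : Matrix (Fin T) (Fin T) ℂ))⁻¹ * C * Cᴴ *
        (M + (l : ℂ) • (1 : Matrix (Fin T) (Fin T) ℂ))⁻¹)).re
    StrictAntiOn f (Set.Ioi (0 : ℝ)) ∧ Filter.Tendsto f Filter.atTop (nhds (0 : ℝ)) := by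
  intro f
  have hH : M.IsHermitian := hM.1
  set U : Matrix (Fin T) (Fin T) ℂ := (hH.eigenvectorUnitary : Matrix (Fin T) (Fin T) ℂ) with hUdef
  set ev : Fin T → ℝ := hH.eigenvalues with hevdef
  have hev : ∀ i, 0 ≤ ev i := fun i => hM.eigenvalues_nonneg i
  have h1 : star U * U = 1 := Matrix.mem_unitaryGroup_iff'.mp hH.eigenvectorUnitary.2
  have h2 : U * star U = 1 := Matrix.mem_unitaryGroup_iff.mp hH.eigenvectorUnitary.2
  set B : Matrix (Fin T) (Fin T) ℂ := star U * C with hBdef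
  have hBne : B ≠ 0 := by
    intro h
    apply hC
    have := congrArg (fun X => U * X) h
    simpa [hBdef, ← Matrix.mul_assoc, h2] using this
  obtain ⟨i₀, j₀, hij⟩ : ∃ i j, B i j ≠ 0 := by
    by_contra h
    push_neg at h
    exact hBne (Matrix.ext fun i j => h i j)
  -- formula for the sum of matrix with shifted eigenvalues
  have hsum : ∀ l : ℝ, 0 < l →
      M + (l : ℂ) • 1 = U * Matrix.diagonal (fun i => ((ev i + l : ℝ) : ℂ)) * star U := by
    intro l hl
    conv_lhs => rw [hH.spectral_theorem, Unitary.conjStarAlgAut_apply, ← hUdef]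
    have hs : (l : ℂ) • (1 : Matrix (Fin T) (Fin T) ℂ) = U * ((l : ℂ) • 1) * star U := by
      rw [Matrix.mul_smul, Matrix.mul_one, Matrix.smul_mul, h2]
    rw [hs, ← Matrix.add_mul, ← Matrix.mul_add]
    congr 2
    rw [← Matrix.diagonal_one, ← Matrix.diagonal_smul, Matrix.diagonal_add]
    congr 1
    funext i
    simp [hevdef]
  have hne : ∀ (l : ℝ), 0 < l → ∀ i, ((ev i + l : ℝ) : ℂ) ≠ 0 := by
    intro l hl i
    exact_mod_cast ne_of_gt (add_pos_of_nonneg_of_pos (hev i) hl)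
  have hinv : ∀ l : ℝ, 0 < l →
      (M + (l : ℂ) • 1)⁻¹ = U * Matrix.diagonal (fun i => ((ev i + l : ℝ) : ℂ)⁻¹) * star U := by
    intro l hl
    apply Matrix.inv_eq_right_inv
    rw [hsum l hl]
    have hcancel : ∀ X : Matrix (Fin T) (Fin T) ℂ, star U * (U * X) = X := fun X => by
      rw [← Matrix.mul_assoc, h1, Matrix.one_mul]
    simp only [Matrix.mul_assoc]
    rw [hcancel, ← Matrix.mul_assoc (Matrix.diagonal _), Matrix.diagonal_mul_diagonal]
    have : (fun i => ((ev i + l : ℝ) : ℂ) * ((ev i + l : ℝ) : ℂ)⁻¹) = fun _ => (1 : ℂ) := by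
      funext i; exact mul_inv_cancel₀ (hne l hl i)
    rw [this, Matrix.diagonal_one, Matrix.one_mul, h2]
  -- main formula for f
  have hf : ∀ l : ℝ, 0 < l →
      f l = ∑ p : Fin T × Fin T, Complex.normSq (B p.1 p.2) * (((ev p.1 + l)⁻¹) ^ 2) := by
    intro l hl
    have hBH : Bᴴ = Cᴴ * U := by
      simp [hBdef, Matrix.conjTranspose_mul, Matrix.star_eq_conjTranspose]
    show (Matrix.trace ((M + (l : ℂ) • 1)⁻¹ * C * Cᴴ * (M + (l : ℂ) • 1)⁻¹)).re = _
    rw [hinv l hl]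
    set D : Matrix (Fin T) (Fin T) ℂ := Matrix.diagonal (fun i => ((ev i + l : ℝ) : ℂ)⁻¹) with hD
    have hcancel : ∀ X : Matrix (Fin T) (Fin T) ℂ, star U * (U * X) = X := fun X => by
      rw [← Matrix.mul_assoc, h1, Matrix.one_mul]
    have htr : Matrix.trace (U * D * star U * C * Cᴴ * (U * D * star U))
        = Matrix.trace (D * B * Bᴴ * D) := by
      rw [hBdef, hBH]
      simp only [Matrix.mul_assoc]
      rw [Matrix.trace_mul_comm]
      simp only [Matrix.mul_assoc, hcancel, h1, Matrix.mul_one]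
    rw [htr]
    rw [Matrix.trace]
    rw [Complex.re_sum]
    rw [Fintype.sum_prod_type]
    apply Finset.sum_congr rfl
    intro i _
    have hdiag : (D * B * Bᴴ * D) i i
        = ((ev i + l : ℝ) : ℂ)⁻¹ * ((B * Bᴴ) i i) * ((ev i + l : ℝ) : ℂ)⁻¹ := by
      rw [hD]
      rw [Matrix.mul_diagonal, Matrix.mul_assoc, Matrix.diagonal_mul]
    rw [Matrix.diag_apply, hdiag]
    have hBB : (B * Bᴴ) i i = ((∑ j, Complex.normSq (B i j) : ℝ) : ℂ) := by
      rw [Matrix.mul_apply]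
      push_cast
      apply Finset.sum_congr rfl
      intro j _
      rw [Matrix.conjTranspose_apply]
      exact (Complex.mul_conj (B i j)).symm ▸ rfl
    rw [hBB]
    rw [← Complex.ofReal_inv, ← Complex.ofReal_mul, ← Complex.ofReal_mul, Complex.ofReal_re]
    simp only [Finset.sum_mul, Finset.mul_sum]
    exact Finset.sum_congr rfl fun j _ => by ring
  -- positivity facts
  have hposd : ∀ (i : Fin T) {l : ℝ}, 0 < l → 0 < ev i + l := fun i l hl =>
    add_pos_of_nonneg_of_pos (hev i) hl
  constructor
  · intro a ha b hb hab
    rw [Set.mem_Ioi] at ha hb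
    rw [hf a ha, hf b hb]
    apply Finset.sum_lt_sum
    · intro p _
      apply mul_le_mul_of_nonneg_left _ (Complex.normSq_nonneg _)
      apply pow_le_pow_left₀ (inv_nonneg.mpr (hposd p.1 hb).le)
      exact inv_anti₀ (hposd p.1 ha) (by linarith)
    · refine ⟨(i₀, j₀), Finset.mem_univ _, ?_⟩
      apply mul_lt_mul_of_pos_left _ (Complex.normSq_pos.mpr hij)
      apply pow_lt_pow_left₀ _ (inv_nonneg.mpr (hposd i₀ hb).le) (by norm_num)
      exact inv_strictAnti₀ (hposd i₀ ha) (by linarith)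
  · have heq : (fun l : ℝ => ∑ p : Fin T × Fin T,
        Complex.normSq (B p.1 p.2) * (((ev p.1 + l)⁻¹) ^ 2)) =ᶠ[Filter.atTop] f := by
      filter_upwards [Filter.eventually_gt_atTop 0] with l hl
      exact (hf l hl).symm
    apply Filter.Tendsto.congr' heq
    have : (0 : ℝ) = ∑ p : Fin T × Fin T, Complex.normSq (B p.1 p.2) * ((0 : ℝ) ^ 2) := by
      simp
    rw [this]
    apply tendsto_finset_sum
    intro p _
    apply Filter.Tendsto.const_mul
    apply Filter.Tendsto.pow
    exact (Filter.tendsto_atTop_add_const_left _ _ Filter.tendsto_id).inv_tendsto_atTop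
end

section
/- Let M be a Hermitian positive-definite T×T complex matrix, C a T×T complex matrix with C ≠ 0, and p > 0 a real number. If Re Tr(M⁻¹ C C† M⁻¹) > p, then there exists a unique λ > 0 such that Re Tr( (M + λ I_T)⁻¹ C C† (M + λ I_T)⁻¹ ) = p. -/
open Matrix
open scoped ComplexOrder

lemma scalar_lem {T : ℕ} (d b : Fin T → ℝ) (hd : ∀ i, 0 < d i) (hb : ∀ i, 0 ≤ b i)
    (i0 : Fin T) (hb0 : 0 < b i0) (p : ℝ) (hp : 0 < p)
    (h : p < ∑ i, b i / (d i + 0) ^ 2) :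
    ∃! l : ℝ, 0 < l ∧ ∑ i, b i / (d i + l) ^ 2 = p := by
  set g : ℝ → ℝ := fun l => ∑ i, b i / (d i + l) ^ 2 with hg
  have hanti : StrictAntiOn g (Set.Ici 0) := by
    intro x hx y hy hxy
    apply Finset.sum_lt_sum
    · intro i _
      have h1 : (0:ℝ) < (d i + x) ^ 2 := by have := hd i; simp at hx; positivity
      have h2 : (d i + x) ^ 2 ≤ (d i + y) ^ 2 := by nlinarith [hd i, hx.out]
      exact div_le_div_of_nonneg_left (hb i) h1 h2
    · refine ⟨i0, Finset.mem_univ _, ?_⟩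
      have h1 : (0:ℝ) < (d i0 + x) ^ 2 := by have := hd i0; simp at hx; positivity
      have h2 : (d i0 + x) ^ 2 < (d i0 + y) ^ 2 := by nlinarith [hd i0, hx.out]
      exact div_lt_div_of_pos_left hb0 h1 h2
  have hcont : ContinuousOn g (Set.Ici 0) := by
    apply continuousOn_finset_sum
    intro i _
    apply ContinuousOn.div continuousOn_const (by fun_prop)
    intro x hx
    have := hd i; simp at hx; positivity
  set S : ℝ := ∑ i, b i with hS
  have hS0 : 0 ≤ S := Finset.sum_nonneg fun i _ => hb i
  set L : ℝ := Real.sqrt (S / p) + 1 with hL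
  have hsq : Real.sqrt (S / p) ^ 2 = S / p := Real.sq_sqrt (by positivity)
  have hL0 : 0 < L := by positivity
  have hLp : g L < p := by
    have hgL : g L ≤ S / L ^ 2 := by
      show (∑ i, b i / (d i + L) ^ 2) ≤ S / L ^ 2
      rw [hS, Finset.sum_div]
      apply Finset.sum_le_sum
      intro i _
      exact div_le_div_of_nonneg_left (hb i) (by positivity) (by nlinarith [hd i])
    have : S / L ^ 2 < p := by
      rw [div_lt_iff₀ (by positivity)]
      have h1 : S / p < L ^ 2 := by
        have : (0:ℝ) ≤ Real.sqrt (S / p) := Real.sqrt_nonneg _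
        nlinarith
      nlinarith [(div_lt_iff₀ hp).mp h1]
    linarith
  have h0 : p < g 0 := h
  obtain ⟨l, hl, hgl⟩ : p ∈ g '' Set.Icc 0 L := by
    apply intermediate_value_Icc' hL0.le (hcont.mono (by intro x hx; exact hx.1))
    exact ⟨hLp.le, h0.le⟩
  have hlpos : 0 < l := by
    rcases lt_or_eq_of_le hl.1 with h' | h'
    · exact h'
    · exfalso; rw [← h'] at hgl; rw [hgl] at h0; exact lt_irrefl p h0
  refine ⟨l, ⟨hlpos, hgl⟩, ?_⟩
  rintro l' ⟨hl'pos, hgl'⟩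
  exact hanti.injOn (Set.mem_Ici.mpr hl'pos.le) (Set.mem_Ici.mpr hlpos.le) (by show g l' = g l; rw [hgl]; exact hgl')


lemma matrix_key {T : ℕ} (M : Matrix (Fin T) (Fin T) ℂ) (hM : M.PosDef)
    (C : Matrix (Fin T) (Fin T) ℂ) (hC : C ≠ 0) :
    ∃ d b : Fin T → ℝ, (∀ i, 0 < d i) ∧ (∀ i, 0 ≤ b i) ∧ (∃ i, 0 < b i) ∧
      ∀ l : ℝ, 0 ≤ l →
        (Matrix.trace ((M + (l : ℂ) • (1 : Matrix (Fin T) (Fin T) ℂ))⁻¹ * C * Cᴴ *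
          (M + (l : ℂ) • (1 : Matrix (Fin T) (Fin T) ℂ))⁻¹)).re = ∑ i, b i / (d i + l) ^ 2 := by
  have hH := hM.1
  set U : Matrix (Fin T) (Fin T) ℂ := (hH.eigenvectorUnitary : Matrix (Fin T) (Fin T) ℂ) with hU
  set d := hH.eigenvalues with hd'
  have hd : ∀ i, 0 < d i := hM.eigenvalues_pos
  have hUU : U * star U = 1 := mem_unitaryGroup_iff.mp hH.eigenvectorUnitary.2
  have hUU' : star U * U = 1 := mem_unitaryGroup_iff'.mp hH.eigenvectorUnitary.2
  set N : Matrix (Fin T) (Fin T) ℂ := star U * C with hNdef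
  have hN : N ≠ 0 := by
    intro h0
    apply hC
    have : U * N = C := by rw [hNdef, ← Matrix.mul_assoc, hUU, Matrix.one_mul]
    rw [← this, h0, Matrix.mul_zero]
  refine ⟨d, fun i => ∑ j, Complex.normSq (N i j), hd, fun i => Finset.sum_nonneg fun j _ => Complex.normSq_nonneg _, ?_, ?_⟩
  · -- some b i > 0
    have : ∃ i j, N i j ≠ 0 := by
      by_contra hcon
      push_neg at hcon
      exact hN (by ext i j; exact hcon i j)
    obtain ⟨i, j, hij⟩ := this
    exact ⟨i, Finset.sum_pos' (fun j _ => Complex.normSq_nonneg _)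
      ⟨j, Finset.mem_univ _, Complex.normSq_pos.mpr hij⟩⟩
  · intro l hl
    have hdl : ∀ i, (0:ℝ) < d i + l := fun i => by have := hd i; linarith
    set D : Matrix (Fin T) (Fin T) ℂ := diagonal (fun i => ((d i + l : ℝ) : ℂ)) with hD
    set D' : Matrix (Fin T) (Fin T) ℂ := diagonal (fun i => (((d i + l)⁻¹ : ℝ) : ℂ)) with hD'
    have hA : M + (l : ℂ) • (1 : Matrix (Fin T) (Fin T) ℂ) = U * D * star U := by
      have h1 : (l : ℂ) • (1 : Matrix (Fin T) (Fin T) ℂ)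
          = U * diagonal (fun _ => (l:ℂ)) * star U := by
        have h2 : diagonal (fun _ : Fin T => (l:ℂ)) = (l : ℂ) • (1 : Matrix (Fin T) (Fin T) ℂ) := by
          ext i j
          simp [Matrix.diagonal_apply, Matrix.one_apply]
        rw [h2, Matrix.mul_smul, Matrix.smul_mul, Matrix.mul_one, hUU]
      conv_lhs => rw [hH.spectral_theorem, Unitary.conjStarAlgAut_apply, ← hU, h1]
      rw [← Matrix.add_mul, ← Matrix.mul_add, Matrix.diagonal_add]
      have harg : (fun i => (RCLike.ofReal ∘ hH.eigenvalues) i + (l:ℂ)) = fun i => ((d i + l : ℝ) : ℂ) := by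
        funext i
        simp [Function.comp, hd']
      rw [harg]
    have hDD : D * D' = 1 := by
      rw [hD, hD', diagonal_mul_diagonal]
      have harg : (fun i => (((d i + l : ℝ)) : ℂ) * (((d i + l)⁻¹ : ℝ) : ℂ)) = fun _ : Fin T => (1:ℂ) := by
        funext i
        rw [← Complex.ofReal_mul, mul_inv_cancel₀ (ne_of_gt (hdl i)), Complex.ofReal_one]
      rw [harg, Matrix.diagonal_one]
    have hInv : (M + (l : ℂ) • (1 : Matrix (Fin T) (Fin T) ℂ))⁻¹ = U * D' * star U := by
      apply Matrix.inv_eq_right_inv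
      rw [hA]
      calc U * D * star U * (U * D' * star U)
          = U * (D * ((star U * U) * (D' * star U))) := by simp only [Matrix.mul_assoc]
        _ = U * (D * (D' * star U)) := by rw [hUU', Matrix.one_mul]
        _ = U * ((D * D') * star U) := by rw [Matrix.mul_assoc]
        _ = U * star U := by rw [hDD, Matrix.one_mul]
        _ = 1 := hUU
    rw [hInv]
    have hNH : Nᴴ = Cᴴ * U := by
      rw [hNdef, conjTranspose_mul, star_eq_conjTranspose, conjTranspose_conjTranspose]
    have hre : U * D' * star U * C * Cᴴ * (U * D' * star U)
        = U * (D' * N * Nᴴ * D') * star U := by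
      rw [hNH, hNdef]
      simp only [Matrix.mul_assoc]
    rw [hre, Matrix.trace_mul_cycle, ← Matrix.mul_assoc, hUU', Matrix.one_mul]
    have hXY : D' * N * Nᴴ * D' = D' * (N * Nᴴ) * D' := by simp only [Matrix.mul_assoc]
    rw [hXY]
    have htr : (D' * (N * Nᴴ) * D').trace
        = ∑ i, (((d i + l)⁻¹ : ℝ) : ℂ) * (N * Nᴴ) i i * (((d i + l)⁻¹ : ℝ) : ℂ) := by
      rw [Matrix.trace]
      apply Finset.sum_congr rfl
      intro i _
      rw [Matrix.diag, Matrix.mul_diagonal, Matrix.diagonal_mul]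
    rw [htr]
    have hNN : ∀ i, (N * Nᴴ) i i = ((∑ j, Complex.normSq (N i j) : ℝ) : ℂ) := by
      intro i
      rw [Matrix.mul_apply]
      push_cast
      apply Finset.sum_congr rfl
      intro j _
      rw [Matrix.conjTranspose_apply]
      exact Complex.mul_conj _
    have : ∑ i, (((d i + l)⁻¹ : ℝ) : ℂ) * (N * Nᴴ) i i * (((d i + l)⁻¹ : ℝ) : ℂ)
        = ((∑ i, (∑ j, Complex.normSq (N i j)) / (d i + l) ^ 2 : ℝ) : ℂ) := by
      push_cast
      apply Finset.sum_congr rfl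
      intro i _
      have hne : ((d i : ℂ) + (l : ℂ)) ≠ 0 := by
        rw [← Complex.ofReal_add]
        exact_mod_cast (hdl i).ne'
      field_simp
      rw [hNN i]
      push_cast
      ring
    rw [this, Complex.ofReal_re]

/-- Existence and uniqueness of the Lagrange multiplier: for Hermitian positive-definite `M`,
`C ≠ 0` and `p > 0`, if the unconstrained power `Re Tr(M⁻¹ C Cᴴ M⁻¹)` exceeds `p`, then
there is a unique `λ > 0` with `Re Tr((M + λI)⁻¹ C Cᴴ (M + λI)⁻¹) = p`. -/
theorem stmt_6 (T : ℕ) (M : Matrix (Fin T) (Fin T) ℂ) (hM : M.PosDef)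
    (C : Matrix (Fin T) (Fin T) ℂ) (hC : C ≠ 0) (p : ℝ) (hp : 0 < p)
    (h : p < (Matrix.trace (M⁻¹ * C * Cᴴ * M⁻¹)).re) :
    ∃! l : ℝ, 0 < l ∧
      (Matrix.trace ((M + (l : ℂ) • (1 : Matrix (Fin T) (Fin T) ℂ))⁻¹ * C * Cᴴ *
        (M + (l : ℂ) • (1 : Matrix (Fin T) (Fin T) ℂ))⁻¹)).re = p := by
  obtain ⟨d, b, hd, hb, ⟨i0, hb0⟩, hkey⟩ := matrix_key M hM C hC
  have h0 : p < ∑ i, b i / (d i + 0) ^ 2 := by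
    have h00 := hkey 0 le_rfl
    simp only [Complex.ofReal_zero, zero_smul, add_zero] at h00
    simpa using h00 ▸ h
  obtain ⟨l, ⟨hl, hgl⟩, huniq⟩ := scalar_lem d b hd hb i0 hb0 p hp h0
  refine ⟨l, ⟨hl, ?_⟩, ?_⟩
  · rw [hkey l hl.le]
    exact hgl
  · rintro y ⟨hy, hty⟩
    exact huniq y ⟨hy, by rw [← hkey y hy.le]; exact hty⟩
end

section
/- Let μ_1,…,μ_N > 0, let Φ_1,…,Φ_N be m×T complex matrices, A_1,…,A_N be m×T complex matrices, V_1,…,V_N Hermitian positive-definite T×T complex matrices, λ > 0, and fix an index n. Define M = Σ_{m=1}^{N} μ_m Φ_m† A_m V_m A_m† Φ_m (which is Hermitian positive semidefinite) and the real-valued function L(W) = Re Tr( W† M W ) − 2 μ_n Re Tr( V_n W† Φ_n† A_n ) + λ Re Tr(W W†) over T×T complex matrices W. Then L attains its unique minimum at W* = μ_n (M + λ I_T)⁻¹ Φ_n† A_n V_n. -/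
open Matrix
open scoped ComplexOrder

lemma key_psd (T : ℕ) (K : Matrix (Fin T) (Fin T) ℂ) (hK : K.PosDef)
    (D : Matrix (Fin T) (Fin T) ℂ) :
    (0 ≤ (trace (Dᴴ * K * D)).re) ∧ ((trace (Dᴴ * K * D)).re = 0 ↔ D = 0) := by
  have hterm : ∀ j, (Dᴴ * K * D) j j = star (fun i => D i j) ⬝ᵥ K *ᵥ (fun i => D i j) := by
    intro j
    simp [Matrix.mul_apply, dotProduct, mulVec, Finset.mul_sum, Finset.sum_mul]
    rw [Finset.sum_comm]
    congr 1; ext i; congr 1; ext k; ring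
  have htr : (trace (Dᴴ * K * D)).re
      = ∑ j, (star (fun i => D i j) ⬝ᵥ K *ᵥ (fun i => D i j)).re := by
    rw [trace, Complex.re_sum]
    exact Finset.sum_congr rfl fun j _ => by rw [diag, hterm j]
  have hnn : ∀ j : Fin T, 0 ≤ (star (fun i => D i j) ⬝ᵥ K *ᵥ (fun i => D i j)).re :=
    fun j => hK.posSemidef.re_dotProduct_nonneg _
  constructor
  · rw [htr]; exact Finset.sum_nonneg fun j _ => hnn j
  · constructor
    · intro h
      rw [htr] at h
      have hz := (Finset.sum_eq_zero_iff_of_nonneg (fun j _ => hnn j)).mp h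
      ext i j
      by_contra hD
      have hx : (fun i => D i j) ≠ 0 := by
        intro h0; exact hD (by simpa using congrFun h0 i)
      have := hK.re_dotProduct_pos hx
      have := hz j (Finset.mem_univ j)
      simp_all
    · intro h; subst h; simp


/-- The WMMSE transmit-precoder subproblem: with `M = Σₘ μₘ Φₘᴴ Aₘ Vₘ Aₘᴴ Φₘ` and
Lagrangian `L(W) = Re Tr(Wᴴ M W) − 2 μₙ Re Tr(Vₙ Wᴴ Φₙᴴ Aₙ) + λ Re Tr(W Wᴴ)`,
the unique minimizer is `W* = μₙ (M + λI)⁻¹ Φₙᴴ Aₙ Vₙ`. -/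
theorem stmt_7 (N m T : ℕ) (μ : Fin N → ℝ) (hμ : ∀ i, 0 < μ i)
    (Φ A : Fin N → Matrix (Fin m) (Fin T) ℂ)
    (V : Fin N → Matrix (Fin T) (Fin T) ℂ) (hV : ∀ i, (V i).PosDef)
    (lam : ℝ) (hlam : 0 < lam) (n : Fin N) :
    let M : Matrix (Fin T) (Fin T) ℂ :=
      ∑ i, (μ i : ℂ) • ((Φ i)ᴴ * A i * V i * (A i)ᴴ * Φ i)
    let L : Matrix (Fin T) (Fin T) ℂ → ℝ := fun W =>
      (Matrix.trace (Wᴴ * M * W)).re -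
        2 * μ n * (Matrix.trace (V n * Wᴴ * (Φ n)ᴴ * A n)).re +
        lam * (Matrix.trace (W * Wᴴ)).re
    let Wstar : Matrix (Fin T) (Fin T) ℂ :=
      (μ n : ℂ) • ((M + (lam : ℂ) • (1 : Matrix (Fin T) (Fin T) ℂ))⁻¹ * (Φ n)ᴴ * A n * V n)
    (∀ W, L Wstar ≤ L W) ∧ (∀ W, L W = L Wstar ↔ W = Wstar) := by
  intro M L Wstar
  set K : Matrix (Fin T) (Fin T) ℂ := M + (lam : ℂ) • 1 with hKdef
  have hMpsd : M.PosSemidef := by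
    apply Finset.sum_induction _ _ (fun a b => Matrix.PosSemidef.add) Matrix.PosSemidef.zero
    intro i _
    have h1 : ((A i)ᴴ * Φ i)ᴴ * V i * ((A i)ᴴ * Φ i) = (Φ i)ᴴ * A i * V i * (A i)ᴴ * Φ i := by
      simp [Matrix.mul_assoc]
    have h2 : (((A i)ᴴ * Φ i)ᴴ * V i * ((A i)ᴴ * Φ i)).PosSemidef :=
      (hV i).posSemidef.conjTranspose_mul_mul_same _
    rw [h1] at h2
    refine ⟨?_, ?_⟩
    · unfold Matrix.IsHermitian
      rw [conjTranspose_smul, h2.isHermitian.eq]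
      congr 1
      exact Complex.conj_ofReal _
    · intro x
      have h3 := smul_nonneg (Complex.zero_le_real.mpr (hμ i).le) (h2.2 x)
      refine le_of_le_of_eq h3 ?_
      simp only [Matrix.smul_apply, smul_eq_mul, Finsupp.mul_sum]
      congr 1; ext a b; congr 1; ext c d; ring
  have hKpd : K.PosDef := by
    apply Matrix.PosDef.posSemidef_add hMpsd
    rw [Matrix.smul_one_eq_diagonal, Matrix.posDef_diagonal_iff]
    intro i
    exact Complex.zero_lt_real.mpr hlam
  set B : Matrix (Fin T) (Fin T) ℂ := (μ n : ℂ) • ((Φ n)ᴴ * A n * V n) with hBdef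
  have hKW : K * Wstar = B := by
    show K * ((μ n : ℂ) • (K⁻¹ * (Φ n)ᴴ * A n * V n)) = B
    rw [Matrix.mul_smul, hBdef]
    congr 1
    simp only [Matrix.mul_assoc]
    rw [← Matrix.mul_assoc K K⁻¹,
      Matrix.mul_nonsing_inv _ ((isUnit_iff_isUnit_det _).mp hKpd.isUnit), Matrix.one_mul]
  have hherm : Kᴴ = K := hKpd.isHermitian
  have hKW' : ∀ X : Matrix (Fin T) (Fin T) ℂ, Xᴴ * K * Wstar = Xᴴ * B := by
    intro X; rw [Matrix.mul_assoc, hKW]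
  have hWK : ∀ X : Matrix (Fin T) (Fin T) ℂ, Wstarᴴ * K * X = Bᴴ * X := by
    intro X; congr 1
    calc Wstarᴴ * K = (Kᴴ * Wstar)ᴴ := by
          rw [conjTranspose_mul, conjTranspose_conjTranspose]
      _ = Bᴴ := by rw [hherm, hKW]
  have htB : ∀ X : Matrix (Fin T) (Fin T) ℂ, (trace (Bᴴ * X)).re = (trace (Xᴴ * B)).re := by
    intro X
    have : trace (Bᴴ * X) = star (trace (Xᴴ * B)) := by
      rw [← trace_conjTranspose, conjTranspose_mul, conjTranspose_conjTranspose]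
    rw [this, Complex.star_def, Complex.conj_re]
  -- rewrite L
  have hL : ∀ W : Matrix (Fin T) (Fin T) ℂ,
      L W = (trace (Wᴴ * K * W)).re - 2 * (trace (Wᴴ * B)).re := by
    intro W
    have e1 : Wᴴ * K * W = Wᴴ * M * W + (lam : ℂ) • (Wᴴ * W) := by
      rw [hKdef]
      simp [Matrix.mul_add, Matrix.add_mul, Matrix.mul_smul, Matrix.smul_mul]
    have e2 : trace (Wᴴ * W) = trace (W * Wᴴ) := trace_mul_comm _ _
    have e3 : trace (Wᴴ * B) = (μ n : ℂ) * trace (V n * Wᴴ * (Φ n)ᴴ * A n) := by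
      rw [hBdef, Matrix.mul_smul, trace_smul, smul_eq_mul]
      congr 1
      rw [trace_mul_comm,
        show (Φ n)ᴴ * A n * V n * Wᴴ = (Φ n)ᴴ * (A n * V n * Wᴴ) by simp [Matrix.mul_assoc],
        trace_mul_comm,
        show A n * V n * Wᴴ * (Φ n)ᴴ = A n * (V n * Wᴴ * (Φ n)ᴴ) by simp [Matrix.mul_assoc],
        trace_mul_comm]
    show (trace (Wᴴ * M * W)).re - 2 * μ n * (trace (V n * Wᴴ * (Φ n)ᴴ * A n)).re
        + lam * (trace (W * Wᴴ)).re = _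
    rw [e1, trace_add, trace_smul, e3]
    simp [Complex.add_re, Complex.real_smul, Complex.mul_re, e2]
    ring
  have hdiff : ∀ W : Matrix (Fin T) (Fin T) ℂ,
      L W - L Wstar = (trace ((W - Wstar)ᴴ * K * (W - Wstar))).re := by
    intro W
    have hexp : (W - Wstar)ᴴ * K * (W - Wstar)
        = Wᴴ * K * W - Wᴴ * B - Bᴴ * W + Bᴴ * Wstar := by
      rw [conjTranspose_sub, Matrix.sub_mul, Matrix.sub_mul, Matrix.mul_sub, Matrix.mul_sub,
        hKW' W, hWK W, hWK Wstar]
      abel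
    have hLs : L Wstar = - (trace (Wstarᴴ * B)).re := by
      rw [hL Wstar, hKW' Wstar]; ring
    rw [hexp, hL W, hLs]
    simp only [trace_add, trace_sub, Complex.add_re, Complex.sub_re, htB W, htB Wstar]
    ring
  refine ⟨fun W => ?_, fun W => ?_⟩
  · have := (key_psd T K hKpd (W - Wstar)).1
    linarith [hdiff W]
  · rw [← sub_eq_zero (a := W)]
    constructor
    · intro h
      exact (key_psd T K hKpd (W - Wstar)).2.1 (by linarith [hdiff W])
    · intro h
      have := hdiff W
      rw [h] at this
      simp at this
      linarith
end

section
/- Let E be a Hermitian positive-definite T×T complex matrix. For every Hermitian positive-definite T×T complex matrix V, Re Tr(V E) − log det V ≥ T + log det E, with equality if and only if V = E⁻¹. (Here det V and det E are positive real numbers since V and E are Hermitian positive definite, and log denotes the real logarithm.) -/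
open Matrix
open scoped ComplexOrder
open scoped MatrixOrder

lemma aux_posDef_conj {n : Type*} [Fintype n] [DecidableEq n]
    {V S : Matrix n n ℂ} (hV : V.PosDef) (hS : IsUnit S) :
    (Sᴴ * V * S).PosDef := by
  exact hV.conjTranspose_mul_mul_same (Matrix.mulVec_injective_iff_isUnit.mpr hS)


lemma aux_det_re {n : Type*} [Fintype n] [DecidableEq n]
    {M : Matrix n n ℂ} (hM : M.IsHermitian) :
    (M.det).re = ∏ i, hM.eigenvalues i := by
  rw [hM.det_eq_prod_eigenvalues]
  norm_cast

lemma aux_core {T : ℕ} {M : Matrix (Fin T) (Fin T) ℂ} (hM : M.PosDef) :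
    ((T : ℝ) ≤ (Matrix.trace M).re - Real.log (M.det).re) ∧
    ((Matrix.trace M).re - Real.log (M.det).re = (T : ℝ) ↔ M = 1) := by
  have hμ := hM.eigenvalues_pos
  have htr : (Matrix.trace M).re = ∑ i, hM.1.eigenvalues i := by
    have h : Matrix.trace M = ∑ i, (hM.1.eigenvalues i : ℂ) := by
      conv_lhs => rw [hM.1.spectral_theorem]
      rw [Unitary.conjStarAlgAut_apply, trace_mul_comm, ← mul_assoc]
      rw [(Matrix.mem_unitaryGroup_iff').mp (Matrix.IsHermitian.eigenvectorUnitary hM.1).2,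
        one_mul, trace_diagonal]
      simp
    rw [h]; simp
  have hdet : Real.log (M.det).re = ∑ i, Real.log (hM.1.eigenvalues i) := by
    rw [aux_det_re hM.1, Real.log_prod (fun i _ => (hμ i).ne')]
  have hle : ∀ i ∈ Finset.univ, (1 : ℝ) ≤ hM.1.eigenvalues i - Real.log (hM.1.eigenvalues i) :=
    fun i _ => by linarith [Real.log_le_sub_one_of_pos (hμ i)]
  have hsum : (Matrix.trace M).re - Real.log (M.det).re
      = ∑ i, (hM.1.eigenvalues i - Real.log (hM.1.eigenvalues i)) := by
    rw [htr, hdet, Finset.sum_sub_distrib]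
  constructor
  · rw [hsum]
    calc (T : ℝ) = ∑ _i : Fin T, (1 : ℝ) := by simp
    _ ≤ _ := Finset.sum_le_sum hle
  · constructor
    · intro heq
      have hall : ∀ i ∈ Finset.univ, (1 : ℝ) = hM.1.eigenvalues i - Real.log (hM.1.eigenvalues i) := by
        rw [← Finset.sum_eq_sum_iff_of_le hle]
        rw [← hsum, heq]; simp
      have hone : ∀ i, hM.1.eigenvalues i = 1 := by
        intro i
        by_contra hne
        have := Real.log_lt_sub_one_of_pos (hμ i) hne
        have := hall i (Finset.mem_univ i)
        linarith
      conv_lhs => rw [hM.1.spectral_theorem]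
      have hd : Matrix.diagonal (RCLike.ofReal ∘ hM.1.eigenvalues : Fin T → ℂ) = 1 := by
        have : (RCLike.ofReal ∘ hM.1.eigenvalues : Fin T → ℂ) = fun _ => 1 := by
          funext i; simp [hone i]
        rw [this, Matrix.diagonal_one]
      rw [hd, Unitary.conjStarAlgAut_apply, mul_one, (Matrix.mem_unitaryGroup_iff).mp (Matrix.IsHermitian.eigenvectorUnitary hM.1).2]
    · intro h
      subst h
      simp [Matrix.trace_one]

/-- Optimization over the auxiliary weight matrix in the WMMSE framework: for Hermitian
positive-definite `E` and every Hermitian positive-definite `V`,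
`Re Tr(V E) − log det V ≥ T + log det E`, with equality iff `V = E⁻¹`. -/
theorem stmt_8 (T : ℕ) (E : Matrix (Fin T) (Fin T) ℂ) (hE : E.PosDef) :
    ∀ V : Matrix (Fin T) (Fin T) ℂ, V.PosDef →
      ((T : ℝ) + Real.log (E.det).re ≤ (Matrix.trace (V * E)).re - Real.log (V.det).re) ∧
      ((Matrix.trace (V * E)).re - Real.log (V.det).re = (T : ℝ) + Real.log (E.det).re ↔
        V = E⁻¹) := by
  intro V hV
  classical
  set S := CFC.sqrt E with hSdef
  have hSH : S.IsHermitian := (CFC.sqrt_nonneg E).posSemidef.1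
  have hSS : S * S = E := CFC.sqrt_mul_sqrt_self E hE.posSemidef.nonneg
  have hEd : E.det ≠ 0 := hE.det_pos.ne'
  have hd : IsUnit S.det := by
    refine isUnit_iff_ne_zero.mpr fun h => hEd ?_
    rw [← hSS, det_mul, h, mul_zero]
  have hSu : IsUnit S := (Matrix.isUnit_iff_isUnit_det S).mpr hd
  have hM : (Sᴴ * V * S).PosDef := aux_posDef_conj hV hSu
  set M := Sᴴ * V * S with hMdef
  have hMS : M = S * V * S := by rw [hMdef, hSH.eq]
  have htr : Matrix.trace (V * E) = Matrix.trace M := by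
    rw [hMS, ← hSS, ← mul_assoc, trace_mul_comm (V * S) S, ← mul_assoc]
  have hdet : M.det = V.det * E.det := by
    rw [hMS, det_mul, det_mul, ← hSS, det_mul]; ring
  have hVim : V.det.im = 0 := ((Complex.lt_def).mp hV.det_pos).2.symm
  have hEim : E.det.im = 0 := ((Complex.lt_def).mp hE.det_pos).2.symm
  have hVre : 0 < V.det.re := by simpa using ((Complex.lt_def).mp hV.det_pos).1
  have hEre : 0 < E.det.re := by simpa using ((Complex.lt_def).mp hE.det_pos).1
  have hMre : M.det.re = V.det.re * E.det.re := by
    rw [hdet, Complex.mul_re, hVim, hEim]; ring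
  have hlog : Real.log M.det.re = Real.log V.det.re + Real.log E.det.re := by
    rw [hMre, Real.log_mul hVre.ne' hEre.ne']
  have htrre : (Matrix.trace (V * E)).re = (Matrix.trace M).re := congrArg Complex.re htr
  have hre : (Matrix.trace (V * E)).re - Real.log V.det.re
      = ((Matrix.trace M).re - Real.log M.det.re) + Real.log E.det.re := by
    rw [htrre, hlog]; ring
  have key := aux_core hM
  have hM1 : M = 1 ↔ V = E⁻¹ := by
    constructor
    · intro h1
      rw [hMS] at h1
      have : S⁻¹ * (S * V * S) * S⁻¹ = S⁻¹ * 1 * S⁻¹ := by rw [h1]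
      rw [mul_assoc S V S, Matrix.nonsing_inv_mul_cancel_left _ _ hd,
        Matrix.mul_nonsing_inv_cancel_right _ _ hd] at this
      rw [this, ← hSS, Matrix.mul_inv_rev, mul_one]
    · intro h1
      rw [hMS, h1, ← hSS, Matrix.mul_inv_rev, ← mul_assoc,
        Matrix.mul_nonsing_inv _ hd, one_mul, Matrix.nonsing_inv_mul _ hd]
  constructor
  · rw [hre]; linarith [key.1]
  · rw [hre, ← hM1, ← key.2]
    constructor <;> intro <;> linarith
end

section
/- Let Ŵ be a T_t×T_t complex matrix, F an L×T_t complex matrix, Θ an L×L complex matrix, G an R×L complex matrix, and z ∈ ℂ. Define B = Ŵ†F†Θ†G†GΘFŴ and the (T_t+L+R+L)×(T_t+L+R+L) block matrix K(z) = [[zI_{T_t}, 0, 0, −Ŵ†F†], [0, 0, −Θ†G†, I_L], [0, −GΘ, I_R, 0], [−FŴ, I_L, 0, 0]]. Then K(z) is invertible if and only if zI_{T_t} − B is invertible, and in that case the upper-left T_t×T_t block of K(z)⁻¹ equals (zI_{T_t} − B)⁻¹. -/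
open Matrix

variable {m n p : Type u} [Fintype m] [Fintype n] [Fintype p]
  [DecidableEq m] [DecidableEq n] [DecidableEq p]

lemma anderson_right_inv (A : Matrix m n ℂ) (C : Matrix n p ℂ) (C' : Matrix p n ℂ)
    (A' : Matrix n m ℂ) (z : ℂ) (S : Matrix m m ℂ)
    (hS : (z • (1 : Matrix m m ℂ) - A * C * C' * A') * S = 1) :
    (Matrix.fromBlocks
        (Matrix.fromBlocks (z • (1 : Matrix m m ℂ)) 0 0 0)
        (Matrix.fromBlocks 0 (-A) (-C) (1 : Matrix n n ℂ))
        (Matrix.fromBlocks 0 (-C') (-A') (1 : Matrix n n ℂ))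
        (Matrix.fromBlocks (1 : Matrix p p ℂ) 0 0 0)) *
      (Matrix.fromBlocks
        (Matrix.fromBlocks S (S*A) (A'*S) (A'*S*A))
        (Matrix.fromBlocks (S*A*C) (S*A*C*C') (A'*S*A*C) (A'*S*A*C*C' + 1))
        (Matrix.fromBlocks (C'*A'*S) (C'*A'*S*A) (C*C'*A'*S) (C*C'*A'*S*A + 1))
        (Matrix.fromBlocks (C'*A'*S*A*C + 1) (C'*A'*S*A*C*C' + C') (C*C'*A'*S*A*C + C)
          (C*C'*A'*S*A*C*C' + C*C'))) = 1 := by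
  have hz : z • S - A * C * C' * A' * S = 1 := by
    rw [← hS, sub_mul, Matrix.smul_mul, one_mul]
  rw [show (1 : Matrix ((m ⊕ n) ⊕ (p ⊕ n)) ((m ⊕ n) ⊕ (p ⊕ n)) ℂ) =
    Matrix.fromBlocks (Matrix.fromBlocks 1 0 0 1) 0 0 (Matrix.fromBlocks 1 0 0 1) by
      simp [← Matrix.fromBlocks_one]]
  simp only [Matrix.fromBlocks_multiply, Matrix.fromBlocks_add, Matrix.fromBlocks_inj]
  have hR : ∀ {q : Type u} [Fintype q] (X : Matrix m q ℂ),
      z • (S * X) + -(A * (C * (C' * (A' * (S * X))))) = X := by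
    intro q _ X
    have h : (z • S - A * C * C' * A' * S) * X = X := by rw [hz, Matrix.one_mul]
    rw [Matrix.sub_mul, Matrix.smul_mul] at h
    simpa only [Matrix.mul_assoc, sub_eq_add_neg] using h
  have h1 : z • S + -(A * (C * (C' * (A' * S)))) = 1 := by
    simpa using hR (1 : Matrix m m ℂ)
  refine ⟨⟨?_,?_,?_,?_⟩,?_,?_,⟨?_,?_,?_,?_⟩⟩ <;>
    simp only [Matrix.zero_mul, Matrix.mul_zero, Matrix.one_mul, Matrix.mul_one,
      zero_add, add_zero, Matrix.neg_mul, Matrix.mul_add, Matrix.mul_assoc,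
      smul_mul_assoc, Matrix.smul_mul, neg_add_rev, Matrix.fromBlocks_zero]
  · exact h1
  · rw [← add_assoc, hR A]; exact add_neg_cancel A
  · exact neg_add_cancel _
  · rw [← add_assoc, neg_add_cancel, zero_add]
  · rw [show (0 : Matrix (m ⊕ n) (p ⊕ n) ℂ) = Matrix.fromBlocks 0 0 0 0 from
        Matrix.fromBlocks_zero.symm, Matrix.fromBlocks_inj]
    refine ⟨?_,?_,?_,?_⟩
    · rw [← add_assoc, hR (A * C)]; exact add_neg_cancel _
    · rw [← add_assoc, hR (A * (C * C'))]; exact add_neg_cancel _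
    · abel
    · abel
  · rw [show (0 : Matrix (p ⊕ n) (m ⊕ n) ℂ) = Matrix.fromBlocks 0 0 0 0 from
        Matrix.fromBlocks_zero.symm, Matrix.fromBlocks_inj]
    exact ⟨by abel, by abel, by abel, by abel⟩
  · rw [← add_assoc, neg_add_cancel, zero_add]
  · abel
  · exact neg_add_cancel _
  · rw [← add_assoc, neg_add_cancel, zero_add]

lemma anderson_det_mp (A : Matrix m n ℂ) (C : Matrix n p ℂ) (C' : Matrix p n ℂ)
    (A' : Matrix n m ℂ) (z : ℂ)
    (hK : IsUnit (Matrix.fromBlocks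
        (Matrix.fromBlocks (z • (1 : Matrix m m ℂ)) 0 0 0)
        (Matrix.fromBlocks 0 (-A) (-C) (1 : Matrix n n ℂ))
        (Matrix.fromBlocks 0 (-C') (-A') (1 : Matrix n n ℂ))
        (Matrix.fromBlocks (1 : Matrix p p ℂ) 0 0 0)).det) :
    IsUnit (z • (1 : Matrix m m ℂ) - A * C * C' * A').det := by
  rw [isUnit_iff_ne_zero]
  intro hd
  obtain ⟨v, hvne, hveq⟩ := (Matrix.exists_mulVec_eq_zero_iff).mpr hd
  rw [isUnit_iff_ne_zero] at hK
  apply hK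
  rw [← Matrix.exists_mulVec_eq_zero_iff]
  refine ⟨Sum.elim (Sum.elim v (A' *ᵥ v)) (Sum.elim ((C' * A') *ᵥ v) ((C * (C' * A')) *ᵥ v)),
    fun h0 => hvne (funext fun i => congrFun h0 (Sum.inl (Sum.inl i))), ?_⟩
  have hv' : (A * C * C' * A') *ᵥ v = z • v := by
    have h := hveq
    rw [Matrix.sub_mulVec, sub_eq_zero, Matrix.smul_mulVec, Matrix.one_mulVec] at h
    exact h.symm
  have h0 : (0 : (m ⊕ n) ⊕ (p ⊕ n) → ℂ) = Sum.elim (Sum.elim (0 : m → ℂ) (0 : n → ℂ)) (Sum.elim (0 : p → ℂ) (0 : n → ℂ)) := by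
    funext i; rcases i with (i|i)|(i|i) <;> rfl
  have hv2 : (A * (C * (C' * A'))) *ᵥ v = z • v := by
    simpa only [Matrix.mul_assoc] using hv'
  funext i
  rcases i with (i | i) | (i | i) <;>
    simp only [Matrix.fromBlocks_mulVec, Sum.elim_inl, Sum.elim_inr, Sum.elim_comp_inl,
      Sum.elim_comp_inr, Pi.add_apply, Pi.zero_apply, Pi.neg_apply, Matrix.zero_mulVec,
      Matrix.neg_mulVec, Matrix.one_mulVec, Matrix.mulVec_mulVec, Matrix.zero_mul,
      Matrix.one_mul, Matrix.neg_mul, Matrix.mul_assoc, hv2, add_zero, zero_add,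
      Matrix.smul_mulVec, Pi.smul_apply, neg_add_cancel, add_neg_cancel, smul_eq_mul]

/-- Anderson linearization: with `B = ŴᴴFᴴΘᴴGᴴGΘFŴ`, the block matrix
`K(z) = [[zI,0,0,−ŴᴴFᴴ],[0,0,−ΘᴴGᴴ,I],[0,−GΘ,I,0],[−FŴ,I,0,0]]` is invertible iff
`zI − B` is, and in that case the upper-left `T_t×T_t` block of `K(z)⁻¹` is `(zI − B)⁻¹`. -/
theorem stmt_13 (Tt L R : ℕ) (W : Matrix (Fin Tt) (Fin Tt) ℂ)
    (F : Matrix (Fin L) (Fin Tt) ℂ) (Θ : Matrix (Fin L) (Fin L) ℂ)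
    (G : Matrix (Fin R) (Fin L) ℂ) (z : ℂ) :
    let B : Matrix (Fin Tt) (Fin Tt) ℂ := Wᴴ * Fᴴ * Θᴴ * Gᴴ * G * Θ * F * W
    let K : Matrix ((Fin Tt ⊕ Fin L) ⊕ (Fin R ⊕ Fin L))
        ((Fin Tt ⊕ Fin L) ⊕ (Fin R ⊕ Fin L)) ℂ :=
      Matrix.fromBlocks
        (Matrix.fromBlocks (z • (1 : Matrix (Fin Tt) (Fin Tt) ℂ)) 0 0 0)
        (Matrix.fromBlocks 0 (-(Wᴴ * Fᴴ)) (-(Θᴴ * Gᴴ)) (1 : Matrix (Fin L) (Fin L) ℂ))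
        (Matrix.fromBlocks 0 (-(G * Θ)) (-(F * W)) (1 : Matrix (Fin L) (Fin L) ℂ))
        (Matrix.fromBlocks (1 : Matrix (Fin R) (Fin R) ℂ) 0 0 0)
    (IsUnit K.det ↔ IsUnit (z • (1 : Matrix (Fin Tt) (Fin Tt) ℂ) - B).det) ∧
    (IsUnit (z • (1 : Matrix (Fin Tt) (Fin Tt) ℂ) - B).det →
      (K⁻¹).submatrix (fun i : Fin Tt => Sum.inl (Sum.inl i))
          (fun i : Fin Tt => Sum.inl (Sum.inl i)) =
        (z • (1 : Matrix (Fin Tt) (Fin Tt) ℂ) - B)⁻¹) := by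
  intro B K
  have key : ∀ (h : IsUnit (z • (1 : Matrix (Fin Tt) (Fin Tt) ℂ) - B).det),
      (z • (1 : Matrix (Fin Tt) (Fin Tt) ℂ) - (Wᴴ * Fᴴ) * (Θᴴ * Gᴴ) * (G * Θ) * (F * W)) *
        (z • (1 : Matrix (Fin Tt) (Fin Tt) ℂ) - B)⁻¹ = 1 := by
    intro h
    have h1 := Matrix.mul_nonsing_inv _ h
    show (z • (1 : Matrix (Fin Tt) (Fin Tt) ℂ) - (Wᴴ * Fᴴ) * (Θᴴ * Gᴴ) * (G * Θ) * (F * W)) *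
        (z • (1 : Matrix (Fin Tt) (Fin Tt) ℂ) - B)⁻¹ = 1
    have hB : (Wᴴ * Fᴴ) * (Θᴴ * Gᴴ) * (G * Θ) * (F * W) = B := by
      show _ = Wᴴ * Fᴴ * Θᴴ * Gᴴ * G * Θ * F * W
      simp only [Matrix.mul_assoc]
    rw [hB]; exact h1
  refine ⟨⟨fun hK => ?_, fun h => ?_⟩, fun h => ?_⟩
  · have := anderson_det_mp (Wᴴ * Fᴴ) (Θᴴ * Gᴴ) (G * Θ) (F * W) z hK
    show IsUnit (z • (1 : Matrix (Fin Tt) (Fin Tt) ℂ) - Wᴴ * Fᴴ * Θᴴ * Gᴴ * G * Θ * F * W).det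
    simpa only [Matrix.mul_assoc] using this
  · exact Matrix.isUnit_det_of_right_inverse
      (anderson_right_inv (Wᴴ * Fᴴ) (Θᴴ * Gᴴ) (G * Θ) (F * W) z _ (key h))
  · have h2 : K⁻¹ = _ := Matrix.inv_eq_right_inv
      (anderson_right_inv (Wᴴ * Fᴴ) (Θᴴ * Gᴴ) (G * Θ) (F * W) z _ (key h))
    rw [h2]
    ext i j
    simp [Matrix.fromBlocks_apply₁₁]
end
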